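/- arXiv:1705.07304 — 2 statements merged into one kernel-verified Lean document; each statement's English description precedes it below -/
import Mathlib

section
/- Let B be a connected building set on S = {1, …, n+1}. Suppose there exist I_1, I_2 ∈ B with I_1 ∩ I_2 ≠ ∅, I_1 ⊄ I_2, I_2 ⊄ I_1, I_1 ∩ I_2 ∉ B, and such that either I_1 ∪ I_2 ≠ S or |(B|_{I_1 ∩ I_2})_max| ≥ 3. Then there exist a nested set N of B, distinct elements J_1, J_2 ∈ B \ {S} such that N ∪ {J_1} and N ∪ {J_2} are both maximal nested sets of B, and integers (a_J)_{J ∈ N} satisfying e_{J_1} + e_{J_2} + Σ_{J ∈ N} a_J e_J = 0 in ℝ^n and 2 + Σ_{J ∈ N} a_J ≤ −1. -/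
/-- A building set on a nonempty finite set `S`: a finite set of nonempty subsets of `S`
closed under unions of intersecting members, and containing all singletons. -/
def IsBuilding (S : Finset ℕ) (B : Finset (Finset ℕ)) : Prop :=
  (∀ I ∈ B, I ⊆ S ∧ I.Nonempty) ∧
  (∀ I ∈ B, ∀ J ∈ B, (I ∩ J).Nonempty → I ∪ J ∈ B) ∧
  (∀ i ∈ S, ({i} : Finset ℕ) ∈ B)

/-- The set of maximal (by inclusion) elements of `B`. -/
def Bmax (B : Finset (Finset ℕ)) : Finset (Finset ℕ) :=
  B.filter (fun I => ∀ J ∈ B, I ⊆ J → I = J)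

/-- The restriction `B|_C = {I ∈ B : I ⊆ C}`. -/
def restrict (B : Finset (Finset ℕ)) (C : Finset ℕ) : Finset (Finset ℕ) :=
  B.filter (fun I => I ⊆ C)

/-- `N` is a nested set of `B`: a subset of `B \ Bmax B` whose members are pairwise
nested or disjoint, such that no union of `k ≥ 2` pairwise disjoint members lies in `B`. -/
def IsNested (B N : Finset (Finset ℕ)) : Prop :=
  N ⊆ B \ Bmax B ∧
  (∀ I ∈ N, ∀ J ∈ N, I ⊆ J ∨ J ⊆ I ∨ I ∩ J = ∅) ∧
  (∀ F ⊆ N, 2 ≤ F.card → (∀ I ∈ F, ∀ J ∈ F, I ≠ J → I ∩ J = ∅) → F.sup id ∉ B)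

/-- `N` is a maximal (by inclusion) nested set of `B`. -/
def MaxNested (B N : Finset (Finset ℕ)) : Prop :=
  IsNested B N ∧ ∀ N' : Finset (Finset ℕ), IsNested B N' → N ⊆ N' → N = N'

/-- For `S = {1, …, n+1}`: `eVec n i` is the `i`-th standard basis vector of `ℝ^n`
for `1 ≤ i ≤ n`, and `eVec n (n+1) = -e_1 - ⋯ - e_n`. -/
def eVec (n : ℕ) (i : ℕ) : Fin n → ℝ :=
  fun j => if i = (j : ℕ) + 1 then 1 else if i = n + 1 then -1 else 0

/-- `eSet n I = ∑ i ∈ I, e_i`. -/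
def eSet (n : ℕ) (I : Finset ℕ) : Fin n → ℝ := ∑ i ∈ I, eVec n i

/-!
Call `(X, Y)` a bad pair if it satisfies the hypotheses on `(I₁, I₂)`, and choose one with
`|X ∪ Y|` minimal and then `|X| + |Y|` maximal. For `q ∈ Y \ X`, the set `X` is then a maximal
member of `B` inside `(X ∪ Y) \ {q}`: a larger `K` would give either a bad pair `(X, E)` with
`E ⊆ K ∩ Y`, of smaller union, or the bad pair `(K, Y)`, of the same union and larger size.
Symmetrically for `Y` and `p ∈ X \ Y`.

Call a point of `L` private in a nested set `N` if it lies in no smaller member of `N`. The private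
parts of the members of `N ∪ {S}` are pairwise disjoint and nonempty (a member without private
points is the disjoint union of at least two members of `N`), so `|N| ≤ |S| - 1`, and a nested set
of size `|S| - 1` is maximal. If `L` has two private points `x ≠ y`, the component of
`B|_{L \ {x}}` containing `y` can be added to `N`. Growing `{X, V}`, `V = X ∪ Y`, in this way while
keeping `p` private in `X` and `q` private in `V` yields a nested set `W` with all private parts
singletons, so of size `|S| - 1`. In `N = W \ {X}` the point `p` is private in `V`, so `Y`, a
component of `B|_{V \ {p}}`, can be added to `N`: both `N ∪ {X}` and `N ∪ {Y}` are maximal.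
The components `D` of `B|_{X ∩ Y}` lie in `N`, and `e_X + e_Y = e_V + ∑ e_D` with `e_S = 0`;
there are at least two of them, and at least three when `V = S`.
-/

open Finset hiding restrict

lemma exists_mem_Bmax_superset {P : Finset (Finset ℕ)} {K : Finset ℕ} (hK : K ∈ P) :
    ∃ M ∈ Bmax P, K ⊆ M := by
  obtain ⟨M, hKM, hM⟩ := P.exists_le_maximal hK
  exact ⟨M, mem_filter.2 ⟨hM.prop, fun J hJ hMJ => hM.eq_of_le hJ hMJ⟩, hKM⟩

lemma mem_Bmax_restrict {B : Finset (Finset ℕ)} {T M : Finset ℕ} :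
    M ∈ Bmax (restrict B T) ↔ M ∈ B ∧ M ⊆ T ∧ ∀ K ∈ B, M ⊆ K → K ⊆ T → M = K := by
  rw [Bmax, Finset.mem_filter]
  simp only [restrict, Finset.mem_filter]
  exact ⟨fun ⟨⟨hM, hMT⟩, h⟩ => ⟨hM, hMT, fun K hK hMK hKT => h K ⟨hK, hKT⟩ hMK⟩,
    fun ⟨hM, hMT, h⟩ => ⟨⟨hM, hMT⟩, fun K hK hMK => h K hK.1 hMK hK.2⟩⟩

lemma exists_mem_Bmax_restrict_superset {B : Finset (Finset ℕ)} {T K : Finset ℕ} (hK : K ∈ B)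
    (hKT : K ⊆ T) : ∃ M ∈ Bmax (restrict B T), K ⊆ M :=
  exists_mem_Bmax_superset (mem_filter.2 ⟨hK, hKT⟩)

section Building

variable {S : Finset ℕ} {B : Finset (Finset ℕ)} {I J K M M' T T' X Y : Finset ℕ}

lemma IsBuilding.subset_of_mem (hb : IsBuilding S B) (hI : I ∈ B) : I ⊆ S := (hb.1 I hI).1

lemma IsBuilding.nonempty_of_mem (hb : IsBuilding S B) (hI : I ∈ B) : I.Nonempty := (hb.1 I hI).2

lemma IsBuilding.union_mem (hb : IsBuilding S B) (hI : I ∈ B) (hJ : J ∈ B)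
    (hIJ : (I ∩ J).Nonempty) : I ∪ J ∈ B :=
  hb.2.1 I hI J hJ hIJ

lemma IsBuilding.singleton_mem (hb : IsBuilding S B) {i : ℕ} (hi : i ∈ S) : {i} ∈ B := hb.2.2 i hi

lemma IsBuilding.subset_of_mem_Bmax_restrict (hb : IsBuilding S B)
    (hM : M ∈ Bmax (restrict B T)) (hK : K ∈ B) (hKT : K ⊆ T) (hKM : (K ∩ M).Nonempty) :
    K ⊆ M := by
  obtain ⟨hMB, hMT, hmax⟩ := mem_Bmax_restrict.1 hM
  have := hmax (K ∪ M) (hb.union_mem hK hMB hKM) subset_union_right (union_subset hKT hMT)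
  exact subset_union_left.trans this.ge

lemma IsBuilding.disjoint_of_mem_Bmax_restrict (hb : IsBuilding S B)
    (hM : M ∈ Bmax (restrict B T)) (hM' : M' ∈ Bmax (restrict B T)) (hne : M ≠ M') :
    Disjoint M M' := by
  rw [disjoint_iff_inter_eq_empty, ← not_nonempty_iff_eq_empty]
  intro h
  obtain ⟨hMB, hMT, hmax⟩ := mem_Bmax_restrict.1 hM
  exact hne (hmax M' (mem_Bmax_restrict.1 hM').1
    (hb.subset_of_mem_Bmax_restrict hM' hMB hMT h) (mem_Bmax_restrict.1 hM').2.1)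

lemma IsBuilding.biUnion_Bmax_restrict (hb : IsBuilding S B) (hT : T ⊆ S) :
    (Bmax (restrict B T)).biUnion id = T := by
  refine Subset.antisymm (biUnion_subset.2 fun M hM => (mem_Bmax_restrict.1 hM).2.1) ?_
  intro i hi
  obtain ⟨M, hM, hiM⟩ := exists_mem_Bmax_restrict_superset (hb.singleton_mem (hT hi))
    (singleton_subset_iff.2 hi)
  exact mem_biUnion.2 ⟨M, hM, hiM (mem_singleton_self i)⟩

lemma IsBuilding.two_le_card_Bmax_restrict (hb : IsBuilding S B) (hT : T ⊆ S)
    (hne : T.Nonempty) (hTB : T ∉ B) : 2 ≤ (Bmax (restrict B T)).card := by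
  have hU := hb.biUnion_Bmax_restrict hT
  by_contra! h
  obtain h0 | h1 : (Bmax (restrict B T)).card = 0 ∨ (Bmax (restrict B T)).card = 1 := by omega
  · rw [card_eq_zero.1 h0, biUnion_empty] at hU
    exact hne.ne_empty hU.symm
  · obtain ⟨M, hM⟩ := card_eq_one.1 h1
    rw [hM, singleton_biUnion] at hU
    exact hTB (hU ▸ (mem_Bmax_restrict.1 (hM ▸ mem_singleton_self M)).1)

lemma exists_ne_subset_mem_Bmax_restrict (hTT' : T ⊆ T')
    (hcard : (Bmax (restrict B T')).card < (Bmax (restrict B T)).card) :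
    ∃ D ∈ Bmax (restrict B T), ∃ D' ∈ Bmax (restrict B T), D ≠ D' ∧
      ∃ E ∈ Bmax (restrict B T'), D ⊆ E ∧ D' ⊆ E := by
  have hE : ∀ D, ∃ E, D ∈ Bmax (restrict B T) → E ∈ Bmax (restrict B T') ∧ D ⊆ E := by
    intro D
    by_cases hD : D ∈ Bmax (restrict B T)
    · obtain ⟨hDB, hDT, -⟩ := mem_Bmax_restrict.1 hD
      obtain ⟨E, hE, hDE⟩ := exists_mem_Bmax_restrict_superset hDB (hDT.trans hTT')
      exact ⟨E, fun _ => ⟨hE, hDE⟩⟩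
    · exact ⟨∅, fun h => absurd h hD⟩
  choose f hf using hE
  obtain ⟨D, hD, D', hD', hne, hDD'⟩ :=
    exists_ne_map_eq_of_card_lt_of_maps_to hcard fun D hD => (hf D hD).1
  exact ⟨D, hD, D', hD', hne, f D, (hf D hD).1, (hf D hD).2, hDD' ▸ (hf D' hD').2⟩

lemma IsBuilding.exists_mem_Bmax_restrict_not_subset (hb : IsBuilding S B) (hXK : X ⊆ K)
    (hlt : (Bmax (restrict B (K ∩ Y))).card < (Bmax (restrict B (X ∩ Y))).card) :
    ∃ E ∈ Bmax (restrict B (K ∩ Y)), (X ∩ E).Nonempty ∧ ¬E ⊆ X ∧ X ∩ E ∉ B := by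
  obtain ⟨D, hD, D', hD', hne, E, hE, hDE, hD'E⟩ :=
    exists_ne_subset_mem_Bmax_restrict (inter_subset_inter_right hXK) hlt
  obtain ⟨hDB, hDXY, hDmax⟩ := mem_Bmax_restrict.1 hD
  obtain ⟨hD'B, hD'XY, -⟩ := mem_Bmax_restrict.1 hD'
  obtain ⟨hEB, hEKY, -⟩ := mem_Bmax_restrict.1 hE
  have hEY : E ⊆ Y := hEKY.trans inter_subset_right
  have hDX : D ⊆ X := hDXY.trans inter_subset_left
  have hDD' : ∀ T ∈ B, D ⊆ T → T ⊆ X ∩ Y → ¬D' ⊆ T := fun T hT hDT hTXY hD'T =>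
    (hb.nonempty_of_mem hD'B).ne_empty (disjoint_self_iff_empty _ |>.1
      ((hb.disjoint_of_mem_Bmax_restrict hD hD' hne).symm.mono_right
        (hDmax T hT hDT hTXY ▸ hD'T)))
  refine ⟨E, hE, (hb.nonempty_of_mem hDB).mono (subset_inter hDX hDE),
    fun hEX => hDD' E hEB hDE (subset_inter hEX hEY) hD'E, fun hXE => ?_⟩
  exact hDD' _ hXE (subset_inter hDX hDE) (inter_subset_inter_left hEY)
    (subset_inter (hD'XY.trans inter_subset_left) hD'E)

end Building

def privPart (N : Finset (Finset ℕ)) (L : Finset ℕ) : Finset ℕ :=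
  L.filter fun x => ∀ K ∈ N, K ⊂ L → x ∉ K

section PrivPart

variable {S : Finset ℕ} {B N W : Finset (Finset ℕ)} {K L : Finset ℕ} {x : ℕ}

lemma mem_privPart : x ∈ privPart N L ↔ x ∈ L ∧ ∀ K ∈ N, K ⊂ L → x ∉ K := mem_filter

lemma privPart_subset : privPart N L ⊆ L := filter_subset _ _

lemma disjoint_privPart_of_ssubset (hK : K ∈ N) (hKL : K ⊂ L) :
    Disjoint (privPart N K) (privPart N L) :=
  disjoint_left.2 fun _ hxK hxL => (mem_privPart.1 hxL).2 K hK hKL (privPart_subset hxK)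

lemma subset_biUnion_privPart : S ⊆ (insert S N).biUnion (privPart N) := by
  intro s hs
  obtain ⟨L, hL, hmin⟩ := exists_min_image ((insert S N).filter (s ∈ ·)) card
    ⟨S, mem_filter.2 ⟨mem_insert_self S N, hs⟩⟩
  rw [mem_filter] at hL
  refine mem_biUnion.2 ⟨L, hL.1, mem_privPart.2 ⟨hL.2, fun K hK hKL hsK => ?_⟩⟩
  exact (card_lt_card hKL).not_ge (hmin K (mem_filter.2 ⟨mem_insert_of_mem hK, hsK⟩))

lemma card_le_of_card_privPart_le_one (h : ∀ L ∈ insert S N, (privPart N L).card ≤ 1) :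
    S.card ≤ (insert S N).card :=
  calc S.card ≤ ((insert S N).biUnion (privPart N)).card := card_le_card subset_biUnion_privPart
    _ ≤ ∑ L ∈ insert S N, (privPart N L).card := card_biUnion_le
    _ ≤ ∑ _L ∈ insert S N, 1 := sum_le_sum h
    _ = (insert S N).card := (card_eq_sum_ones _).symm

lemma mem_of_mem_insert_of_ssubset (hK : K ∈ insert S N) (hKL : K ⊂ L) (hLS : L ⊆ S) : K ∈ N :=
  (mem_insert.1 hK).resolve_left (hKL.trans_subset hLS).ne

lemma subset_erase_of_mem_privPart (hx : x ∈ privPart W L) (hK : K ∈ W) (hKL : K ⊂ L) :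
    K ⊆ L.erase x :=
  subset_erase.2 ⟨hKL.subset, (mem_privPart.1 hx).2 K hK hKL⟩

end PrivPart

section Nested

variable {S : Finset ℕ} {B N W : Finset (Finset ℕ)} {K L M : Finset ℕ} {x : ℕ}

lemma IsNested.subset (hW : IsNested B W) (hN : N ⊆ W) : IsNested B N :=
  ⟨hN.trans hW.1, fun I hI J hJ => hW.2.1 I (hN hI) J (hN hJ), fun F hF => hW.2.2 F (hF.trans hN)⟩

lemma IsNested.mem_of_mem (hN : IsNested B N) (hK : K ∈ N) : K ∈ B := (mem_sdiff.1 (hN.1 hK)).1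

lemma isNested_of_chain (hb : IsBuilding S B) (hN : N ⊆ B \ Bmax B)
    (hchain : ∀ K ∈ N, ∀ L ∈ N, K ⊆ L ∨ L ⊆ K) : IsNested B N := by
  refine ⟨hN, fun K hK L hL => (hchain K hK L hL).imp_right Or.inl, fun F hF h2 hdisj _ => ?_⟩
  obtain ⟨K, hK, L, hL, hKL⟩ := one_lt_card.1 h2
  have hKL' := hdisj K hK L hL hKL
  rcases hchain K (hF hK) L (hF hL) with h | h
  · rw [inter_eq_left.2 h] at hKL'
    exact (hb.nonempty_of_mem (mem_sdiff.1 (hN (hF hK))).1).ne_empty hKL'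
  · rw [inter_eq_right.2 h] at hKL'
    exact (hb.nonempty_of_mem (mem_sdiff.1 (hN (hF hL))).1).ne_empty hKL'

lemma IsNested.subset_of_mem_insert (hb : IsBuilding S B) (hN : IsNested B N)
    (hL : L ∈ insert S N) : L ⊆ S :=
  (mem_insert.1 hL).elim (fun h => h.le) fun h => hb.subset_of_mem (hN.mem_of_mem h)

lemma IsNested.compat_insert (hb : IsBuilding S B) (hN : IsNested B N) :
    ∀ K ∈ insert S N, ∀ L ∈ insert S N, K ⊆ L ∨ L ⊆ K ∨ K ∩ L = ∅ := by
  intro K hK L hL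
  rcases mem_insert.1 hK with rfl | hK'
  · exact Or.inr (Or.inl (hN.subset_of_mem_insert hb hL))
  rcases mem_insert.1 hL with rfl | hL'
  · exact Or.inl (hN.subset_of_mem_insert hb hK)
  exact hN.2.1 K hK' L hL'

lemma IsNested.disjoint_privPart (hb : IsBuilding S B) (hN : IsNested B N)
    (hK : K ∈ insert S N) (hL : L ∈ insert S N) (hKL : K ≠ L) :
    Disjoint (privPart N K) (privPart N L) := by
  rcases hN.compat_insert hb K hK L hL with h | h | h
  · have hss := ssubset_of_subset_of_ne h hKL
    exact disjoint_privPart_of_ssubset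
      (mem_of_mem_insert_of_ssubset hK hss (hN.subset_of_mem_insert hb hL)) hss
  · have hss := ssubset_of_subset_of_ne h hKL.symm
    exact (disjoint_privPart_of_ssubset
      (mem_of_mem_insert_of_ssubset hL hss (hN.subset_of_mem_insert hb hK)) hss).symm
  · exact disjoint_of_subset_left privPart_subset
      (disjoint_of_subset_right privPart_subset (disjoint_iff_inter_eq_empty.2 h))

lemma IsNested.privPart_nonempty (hb : IsBuilding S B) (hN : IsNested B N) (hL : L ∈ B) :
    (privPart N L).Nonempty := by
  by_contra h
  set F := Bmax (N.filter (· ⊂ L))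
  have hFN : F ⊆ N := (filter_subset _ _).trans (filter_subset _ _)
  have hFL : ∀ K ∈ F, K ⊂ L := fun K hK => (mem_filter.1 (mem_filter.1 hK).1).2
  have hdisj : ∀ K ∈ F, ∀ K' ∈ F, K ≠ K' → K ∩ K' = ∅ := by
    intro K hK K' hK' hne
    rcases hN.2.1 K (hFN hK) K' (hFN hK') with h | h | h
    · exact absurd ((mem_filter.1 hK).2 K' (mem_filter.1 hK').1 h) hne
    · exact absurd ((mem_filter.1 hK').2 K (mem_filter.1 hK).1 h).symm hne
    · exact h
  have hsup : F.sup id = L := by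
    refine le_antisymm (Finset.sup_le fun K hK => (hFL K hK).subset) fun x hx => ?_
    obtain ⟨K, hK, hKL, hxK⟩ : ∃ K ∈ N, K ⊂ L ∧ x ∈ K := by
      by_contra! hx'
      exact h ⟨x, mem_privPart.2 ⟨hx, fun K hK hKL => hx' K hK hKL⟩⟩
    obtain ⟨A, hA, hKA⟩ := exists_mem_Bmax_superset (P := N.filter (· ⊂ L)) (mem_filter.2 ⟨hK, hKL⟩)
    exact mem_sup.2 ⟨A, hA, hKA hxK⟩
  have h2 : 2 ≤ F.card := by
    by_contra! h2
    obtain h0 | h1 : F.card = 0 ∨ F.card = 1 := by omega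
    · rw [card_eq_zero.1 h0, sup_empty] at hsup
      exact (hb.nonempty_of_mem hL).ne_empty hsup.symm
    · obtain ⟨K, hK⟩ := card_eq_one.1 h1
      rw [hK, sup_singleton] at hsup
      exact (hFL K (hK ▸ mem_singleton_self K)).ne hsup
  exact hN.2.2 F hFN h2 hdisj (hsup ▸ hL)

lemma mem_of_Bmax_eq_singleton (hconn : Bmax B = {S}) : S ∈ B :=
  (mem_filter.1 (hconn ▸ mem_singleton_self S)).1

lemma IsNested.ne_of_mem (hconn : Bmax B = {S}) (hN : IsNested B N) (hK : K ∈ N) : K ≠ S := by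
  have := (mem_sdiff.1 (hN.1 hK)).2
  rwa [hconn, notMem_singleton] at this

lemma IsNested.card_lt (hb : IsBuilding S B) (hconn : Bmax B = {S}) (hN : IsNested B N) :
    N.card < S.card :=
  calc N.card < (insert S N).card := by
        rw [card_insert_of_notMem fun h => hN.ne_of_mem hconn h rfl]; omega
    _ ≤ ((insert S N).biUnion (privPart N)).card :=
        card_le_card_biUnion (fun _ hK _ hL hKL => hN.disjoint_privPart hb hK hL hKL)
          fun L hL => hN.privPart_nonempty hb ((mem_insert.1 hL).elim
            (fun h => h ▸ mem_of_Bmax_eq_singleton hconn) hN.mem_of_mem)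
    _ ≤ S.card := card_le_card (biUnion_subset.2 fun _ hL =>
        privPart_subset.trans (hN.subset_of_mem_insert hb hL))

lemma IsNested.maxNested (hb : IsBuilding S B) (hconn : Bmax B = {S}) (hN : IsNested B N)
    (hcard : S.card ≤ N.card + 1) : MaxNested B N :=
  ⟨hN, fun _ hN' hNN' => eq_of_subset_of_card_le hNN' (by have := hN'.card_lt hb hconn; omega)⟩

lemma IsNested.compat_of_mem_Bmax_restrict (hb : IsBuilding S B) (hW : IsNested B W)
    (hL : L ∈ insert S W) (hx : x ∈ privPart W L) (hM : M ∈ Bmax (restrict B (L.erase x)))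
    (hK : K ∈ W) : M ⊆ K ∨ K ⊆ M ∨ Disjoint M K := by
  have hML : M ⊆ L := (mem_Bmax_restrict.1 hM).2.1.trans (erase_subset _ _)
  rcases hW.compat_insert hb K (mem_insert_of_mem hK) L hL with h | h | h
  · obtain rfl | hKL := eq_or_ne K L
    · exact Or.inl hML
    by_cases hKM : (K ∩ M).Nonempty
    · exact Or.inr (Or.inl (hb.subset_of_mem_Bmax_restrict hM (hW.mem_of_mem hK)
        (subset_erase_of_mem_privPart hx hK (ssubset_of_subset_of_ne h hKL)) hKM))
    · exact Or.inr (Or.inr (disjoint_iff_inter_eq_empty.2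
        (by rwa [inter_comm, ← not_nonempty_iff_eq_empty])))
  · exact Or.inl (hML.trans h)
  · exact Or.inr (Or.inr ((disjoint_iff_inter_eq_empty.2 h).symm.mono_left hML))

lemma IsNested.union_sup_notMem (hb : IsBuilding S B) (hW : IsNested B W) (hL : L ∈ W)
    {G : Finset (Finset ℕ)} (hGW : G ⊆ W) (hGd : ∀ K ∈ G, ∀ K' ∈ G, K ≠ K' → K ∩ K' = ∅)
    (hGL : ∀ K ∈ G, K ⊆ L ∨ K ∩ L = ∅) (hK₀ : K ∈ G) (hK₀L : K ∩ L = ∅) :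
    L ∪ G.sup id ∉ B := by
  set G' := G.filter fun K => K ∩ L = ∅
  have hLG' : L ∉ G' := fun h =>
    (hb.nonempty_of_mem (hW.mem_of_mem hL)).ne_empty (inter_self L ▸ (mem_filter.1 h).2)
  have hsup : (insert L G').sup id = L ∪ G.sup id := by
    rw [sup_insert]
    refine Subset.antisymm (union_subset_union_right (sup_mono (filter_subset _ _)))
      (union_subset subset_union_left (Finset.sup_le fun K hK => ?_))
    rcases hGL K hK with h | h
    · exact h.trans subset_union_left
    · exact (le_sup (f := id) (mem_filter.2 ⟨hK, h⟩)).trans subset_union_right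
  refine hsup ▸ hW.2.2 (insert L G') (insert_subset hL ((filter_subset _ _).trans hGW)) ?_ ?_
  · rw [card_insert_of_notMem hLG']
    have : 0 < G'.card := card_pos.2 ⟨K, mem_filter.2 ⟨hK₀, hK₀L⟩⟩
    omega
  · intro K hK K' hK' hne
    rcases mem_insert.1 hK with rfl | hK <;> rcases mem_insert.1 hK' with rfl | hK'
    · exact absurd rfl hne
    · rw [inter_comm]
      exact (mem_filter.1 hK').2
    · exact (mem_filter.1 hK).2
    · exact hGd K (mem_filter.1 hK).1 K' (mem_filter.1 hK').1 hne

lemma IsNested.sup_notMem_of_mem_Bmax_restrict (hb : IsBuilding S B) (hW : IsNested B W)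
    (hL : L ∈ insert S W) (hx : x ∈ privPart W L) (hM : M ∈ Bmax (restrict B (L.erase x)))
    {G : Finset (Finset ℕ)} (hGW : G ⊆ W) (hG : G.Nonempty)
    (hGd : ∀ K ∈ G, ∀ K' ∈ G, K ≠ K' → K ∩ K' = ∅) (hGM : ∀ K ∈ G, Disjoint K M) :
    M ∪ G.sup id ∉ B := by
  intro hU
  obtain ⟨hMB, hMsub, hmax⟩ := mem_Bmax_restrict.1 hM
  have hMne := hb.nonempty_of_mem hMB
  have hML : M ⊆ L := hMsub.trans (erase_subset _ _)
  have hKne (K) (hK : K ∈ G) : K.Nonempty := hb.nonempty_of_mem (hW.mem_of_mem (hGW hK))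
  have hGL : ∀ K ∈ G, K ⊂ L ∨ K ∩ L = ∅ := by
    intro K hK
    have hKM : ¬M ⊆ K := fun h =>
      hMne.ne_empty (disjoint_self_iff_empty _ |>.1 ((hGM K hK).mono_left h))
    rcases hW.compat_insert hb K (mem_insert_of_mem (hGW hK)) L hL with h | h | h
    · exact Or.inl (ssubset_of_subset_of_ne h fun hKL => hKM (hKL ▸ hML))
    · exact absurd (hML.trans h) hKM
    · exact Or.inr h
  -- If all of `G` lies below `L`, then `M ∪ ⋃ G ⊆ L \ {x}` contradicts the maximality of `M`.
  obtain ⟨K₀, hK₀, hK₀L⟩ : ∃ K₀ ∈ G, ¬K₀ ⊂ L := by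
    by_contra! hin
    have hUM := hmax _ hU subset_union_left (union_subset hMsub (Finset.sup_le fun K hK =>
      subset_erase_of_mem_privPart hx (hGW hK) (hin K hK)))
    obtain ⟨K, hK⟩ := hG
    have hKM : K ⊆ M := hUM ▸ (le_sup (f := id) hK).trans subset_union_right
    exact (hKne K hK).ne_empty (disjoint_self_iff_empty _ |>.1 ((hGM K hK).mono_right hKM))
  have hK₀L' : K₀ ∩ L = ∅ := (hGL K₀ hK₀).resolve_left hK₀L
  have hLW : L ∈ W := by
    refine (mem_insert.1 hL).resolve_left fun hLS => ?_
    rw [hLS, inter_eq_left.2 (hb.subset_of_mem (hW.mem_of_mem (hGW hK₀)))] at hK₀L'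
    exact (hKne K₀ hK₀).ne_empty hK₀L'
  refine hW.union_sup_notMem hb hLW hGW hGd (fun K hK => (hGL K hK).imp_left (·.subset)) hK₀
    hK₀L' ?_
  rw [← union_eq_left.2 hML, union_assoc]
  exact hb.union_mem (hW.mem_of_mem hLW) hU (hMne.mono (subset_inter hML subset_union_left))

lemma IsNested.insert_of_mem_Bmax_restrict (hb : IsBuilding S B) (hconn : Bmax B = {S})
    (hW : IsNested B W) (hL : L ∈ insert S W) (hx : x ∈ privPart W L)
    (hM : M ∈ Bmax (restrict B (L.erase x))) : IsNested B (insert M W) := by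
  obtain ⟨hMB, hMsub, -⟩ := mem_Bmax_restrict.1 hM
  have hMS : M ≠ S := fun h => (mem_erase.1 (hMsub (h ▸ hW.subset_of_mem_insert hb hL
    (mem_privPart.1 hx).1))).1 rfl
  have hcompat := fun K (hK : K ∈ W) => hW.compat_of_mem_Bmax_restrict hb hL hx hM hK
  refine ⟨insert_subset (mem_sdiff.2 ⟨hMB, by rwa [hconn, notMem_singleton]⟩) hW.1, ?_, ?_⟩
  · intro K hK K' hK'
    rcases mem_insert.1 hK with rfl | hKW <;> rcases mem_insert.1 hK' with rfl | hK'W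
    · exact Or.inl subset_rfl
    · simpa only [← disjoint_iff_inter_eq_empty] using hcompat K' hK'W
    · simpa only [← disjoint_iff_inter_eq_empty, disjoint_comm, or_left_comm] using hcompat K hKW
    · exact hW.2.1 K hKW K' hK'W
  intro F hF h2 hdisj hU
  by_cases hMF : M ∈ F
  · rw [← insert_erase hMF, sup_insert] at hU
    refine hW.sup_notMem_of_mem_Bmax_restrict hb hL hx hM (fun K hK =>
      (mem_insert.1 (hF (mem_of_mem_erase hK))).resolve_left (ne_of_mem_erase hK))
      (card_pos.1 (by rw [card_erase_of_mem hMF]; omega))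
      (fun K hK K' hK' => hdisj K (mem_of_mem_erase hK) K' (mem_of_mem_erase hK'))
      (fun K hK => disjoint_iff_inter_eq_empty.2
        (hdisj K (mem_of_mem_erase hK) M hMF (ne_of_mem_erase hK))) hU
  · exact hW.2.2 F ((subset_insert_iff_of_notMem hMF).1 hF) h2 hdisj hU

lemma IsNested.mem_privPart_insert (hb : IsBuilding S B) (hW : IsNested B W)
    {Z : Finset ℕ} {z y : ℕ} (hZ : Z ∈ insert S W) (hz : z ∈ privPart W Z) (hL : L ∈ insert S W)
    (hy : y ∈ privPart W L) (hyM : y ∈ M) (hML : M ⊆ L) (hzM : L = Z → z ∉ M) :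
    z ∈ privPart (insert M W) Z := by
  obtain ⟨hzZ, hzW⟩ := mem_privPart.1 hz
  refine mem_privPart.2 ⟨hzZ, fun K hK hKZ hzK => ?_⟩
  rcases mem_insert.1 hK with rfl | hK
  swap
  · exact hzW K hK hKZ hzK
  have hZS := hW.subset_of_mem_insert hb hZ
  have hLS := hW.subset_of_mem_insert hb hL
  rcases hW.compat_insert hb L hL Z hZ with h | h | h
  · obtain rfl | hLZ := eq_or_ne L Z
    · exact hzM rfl hzK
    · have hss := ssubset_of_subset_of_ne h hLZ
      exact hzW L (mem_of_mem_insert_of_ssubset hL hss hZS) hss (hML hzK)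
  · obtain rfl | hLZ := eq_or_ne L Z
    · exact hzM rfl hzK
    · have hss := ssubset_of_subset_of_ne h hLZ.symm
      exact (mem_privPart.1 hy).2 Z (mem_of_mem_insert_of_ssubset hZ hss hLS) hss
        (hKZ.subset hyM)
  · exact (not_nonempty_iff_eq_empty.2 h) ⟨z, mem_inter.2 ⟨hML hzK, hzZ⟩⟩

lemma IsNested.exists_insert_privPart (hb : IsBuilding S B) (hconn : Bmax B = {S})
    (hW : IsNested B W) (hL : L ∈ insert S W) {y : ℕ} (hx : x ∈ privPart W L)
    (hy : y ∈ privPart W L) (hxy : x ≠ y) :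
    ∃ M ∉ W, IsNested B (insert M W) ∧ ∀ Z ∈ insert S W, ∀ z ∈ privPart W Z,
      (L = Z → z = x) → z ∈ privPart (insert M W) Z := by
  have hyL := (mem_privPart.1 hy).1
  obtain ⟨M, hM, hyM⟩ := exists_mem_Bmax_restrict_superset
    (hb.singleton_mem (hW.subset_of_mem_insert hb hL hyL))
    (singleton_subset_iff.2 (mem_erase.2 ⟨hxy.symm, hyL⟩))
  replace hyM : y ∈ M := hyM (mem_singleton_self y)
  have hMsub := (mem_Bmax_restrict.1 hM).2.1
  have hML : M ⊂ L := hMsub.trans_ssubset (erase_ssubset (mem_privPart.1 hx).1)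
  refine ⟨M, fun h => (mem_privPart.1 hy).2 M h hML hyM,
    hW.insert_of_mem_Bmax_restrict hb hconn hL hx hM, fun Z hZ z hz hzx => ?_⟩
  refine hW.mem_privPart_insert hb hZ hz hL hy hyM hML.subset fun hLZ hzM => ?_
  exact (mem_erase.1 (hMsub (hzx hLZ ▸ hzM))).1 rfl

lemma IsNested.exists_card_privPart_le_one (hb : IsBuilding S B) (hconn : Bmax B = {S})
    {W₀ P : Finset (Finset ℕ)} (hW₀ : IsNested B W₀) (c : Finset ℕ → ℕ)
    (hP : ∀ Z ∈ P, Z ∈ insert S W₀ ∧ c Z ∈ privPart W₀ Z) :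
    ∃ W, IsNested B W ∧ W₀ ⊆ W ∧ (∀ Z ∈ P, c Z ∈ privPart W Z) ∧
      ∀ L ∈ insert S W, (privPart W L).card ≤ 1 := by
  classical
  set good := B.powerset.filter fun W => IsNested B W ∧ W₀ ⊆ W ∧ ∀ Z ∈ P, c Z ∈ privPart W Z
  have mem_good {W} (hW : IsNested B W) (hW₀W : W₀ ⊆ W) (hWP : ∀ Z ∈ P, c Z ∈ privPart W Z) :
      W ∈ good :=
    mem_filter.2 ⟨mem_powerset.2 (hW.1.trans sdiff_subset), hW, hW₀W, hWP⟩
  obtain ⟨W, hWgood, hWmax⟩ := exists_max_image good card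
    ⟨W₀, mem_good hW₀ subset_rfl fun Z hZ => (hP Z hZ).2⟩
  obtain ⟨-, hW, hW₀W, hWP⟩ := mem_filter.1 hWgood
  refine ⟨W, hW, hW₀W, hWP, fun L hL => ?_⟩
  by_contra! h2
  obtain ⟨x, hx, y, hy, hxy, hxP⟩ :
      ∃ x ∈ privPart W L, ∃ y ∈ privPart W L, x ≠ y ∧ (L ∈ P → x = c L) := by
    by_cases hLP : L ∈ P
    · obtain ⟨y, hy, hyx⟩ := exists_mem_ne h2 (c L)
      exact ⟨c L, hWP L hLP, y, hy, hyx.symm, fun _ => rfl⟩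
    · obtain ⟨x, hx, y, hy, hxy⟩ := one_lt_card.1 h2
      exact ⟨x, hx, y, hy, hxy, fun h => absurd h hLP⟩
  obtain ⟨M, hMW, hMnested, hpins⟩ := hW.exists_insert_privPart hb hconn hL hx hy hxy
  have := hWmax _ <| mem_good hMnested (hW₀W.trans (subset_insert _ _)) fun Z hZ =>
    hpins Z (insert_subset_insert S hW₀W (hP Z hZ).1) _ (hWP Z hZ) fun hLZ => by
      subst hLZ
      exact (hxP hZ).symm
  rw [card_insert_of_notMem hMW] at this
  omega

end Nested

section Flip

variable {S : Finset ℕ} {B W : Finset (Finset ℕ)} {X Y V : Finset ℕ} {p q : ℕ}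

lemma exists_isNested_chain_privPart (hb : IsBuilding S B) (hconn : Bmax B = {S})
    (hX : X ∈ B) (hV : V ∈ B) (hXV : X ⊂ V) (hp : p ∈ X) (hq : q ∈ V \ X) :
    ∃ W, IsNested B W ∧ X ∈ W ∧ (V ≠ S → V ∈ W) ∧ p ∈ privPart W X ∧ q ∈ privPart W V ∧
      ∀ L ∈ insert S W, (privPart W L).card ≤ 1 := by
  classical
  obtain ⟨hqV, hqX⟩ := mem_sdiff.1 hq
  have hXS : X ≠ S := (hXV.trans_subset (hb.subset_of_mem hV)).ne
  set W₀ := ({X, V} : Finset (Finset ℕ)).erase S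
  have hW₀ : ∀ K ∈ W₀, K ≠ S ∧ (K = X ∨ K = V) := fun K hK => by simpa using mem_erase.1 hK
  have hXW₀ : X ∈ W₀ := mem_erase.2 ⟨hXS, mem_insert_self X _⟩
  have hVW₀ (hVS : V ≠ S) : V ∈ W₀ := mem_erase.2 ⟨hVS, by simp⟩
  have hW₀nested : IsNested B W₀ := by
    refine isNested_of_chain hb (fun K hK => mem_sdiff.2 ⟨?_, ?_⟩) fun K hK L hL => ?_
    · exact (hW₀ K hK).2.elim (· ▸ hX) (· ▸ hV)
    · rw [hconn, notMem_singleton]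
      exact (hW₀ K hK).1
    · rcases (hW₀ K hK).2 with rfl | rfl <;> rcases (hW₀ L hL).2 with rfl | rfl <;>
        simp [hXV.subset]
  obtain ⟨W, hW, hW₀W, hWP, hWcard⟩ := hW₀nested.exists_card_privPart_le_one hb hconn
    (P := {X, V}) (fun Z => if Z = X then p else q) <| by
      intro Z hZ
      rcases mem_insert.1 hZ with rfl | hZ
      · refine ⟨mem_insert_of_mem hXW₀, (if_pos rfl).symm ▸ mem_privPart.2 ⟨hp, ?_⟩⟩
        intro K hK hKZ
        rcases (hW₀ K hK).2 with rfl | rfl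
        exacts [(ssubset_irrefl K hKZ).elim, (hKZ.not_subset hXV.subset).elim]
      · rw [mem_singleton.1 hZ, if_neg hXV.ne']
        refine ⟨?_, mem_privPart.2 ⟨hqV, fun K hK hKV => ?_⟩⟩
        · by_cases hVS : V = S
          exacts [hVS ▸ mem_insert_self S W₀, mem_insert_of_mem (hVW₀ hVS)]
        · rcases (hW₀ K hK).2 with rfl | rfl
          exacts [hqX, (ssubset_irrefl K hKV).elim]
  refine ⟨W, hW, hW₀W hXW₀, fun hVS => hW₀W (hVW₀ hVS), ?_, ?_, hWcard⟩
  · simpa using hWP X (by simp)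
  · simpa [hXV.ne'] using hWP V (by simp)

lemma IsNested.mem_privPart_erase (hW : IsNested B W) (hXW : X ∈ W) (hp : p ∈ privPart W X)
    (hq : q ∈ privPart W V) (hXq : X ∈ Bmax (restrict B (V.erase q))) (hpV : p ∈ V) :
    p ∈ privPart (W.erase X) V := by
  refine mem_privPart.2 ⟨hpV, fun K hK hKV hpK => ?_⟩
  obtain ⟨hKX, hKW⟩ := mem_erase.1 hK
  rcases hW.2.1 K hKW X hXW with h | h | h
  · exact (mem_privPart.1 hp).2 K hKW (ssubset_of_subset_of_ne h hKX) hpK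
  · exact hKX ((mem_Bmax_restrict.1 hXq).2.2 K (hW.mem_of_mem hKW) h
      (subset_erase_of_mem_privPart hq hKW hKV)).symm
  · exact not_nonempty_iff_eq_empty.2 h ⟨p, mem_inter.2 ⟨hpK, (mem_privPart.1 hp).1⟩⟩

lemma IsNested.mem_of_mem_Bmax_restrict_inter (hb : IsBuilding S B) (hW : IsNested B W)
    (hp : p ∈ privPart W X) (hcard : (privPart W X).card ≤ 1) (hpY : p ∉ Y)
    (hYp : Y ∈ Bmax (restrict B ((X ∪ Y).erase p))) {E : Finset ℕ}
    (hE : E ∈ Bmax (restrict B (X ∩ Y))) : E ∈ W := by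
  obtain ⟨hEB, hEXY, -⟩ := mem_Bmax_restrict.1 hE
  obtain ⟨e, he⟩ := hW.privPart_nonempty hb hEB
  obtain ⟨heE, heW⟩ := mem_privPart.1 he
  have heY : e ∈ Y := (hEXY.trans inter_subset_right) heE
  obtain ⟨K, hKW, hKX, heK⟩ : ∃ K ∈ W, K ⊂ X ∧ e ∈ K := by
    by_contra! h
    have := card_le_one.1 hcard e (mem_privPart.2 ⟨(hEXY.trans inter_subset_left) heE, h⟩) p hp
    exact hpY (this ▸ heY)
  have hKB := hW.mem_of_mem hKW
  have hKY : K ⊆ Y := hb.subset_of_mem_Bmax_restrict hYp hKB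
    (subset_erase.2 ⟨hKX.subset.trans subset_union_left, (mem_privPart.1 hp).2 K hKW hKX⟩)
    ⟨e, mem_inter.2 ⟨heK, heY⟩⟩
  have hKE : K ⊆ E := hb.subset_of_mem_Bmax_restrict hE hKB (subset_inter hKX.subset hKY)
    ⟨e, mem_inter.2 ⟨heK, heE⟩⟩
  obtain rfl | hne := eq_or_ne K E
  · exact hKW
  · exact absurd heK (heW K hKW (ssubset_of_subset_of_ne hKE hne))

theorem exists_maxNested_insert_pair (hb : IsBuilding S B) (hconn : Bmax B = {S}) (hXY : (X ∩ Y).Nonempty)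
    (hp : p ∈ X \ Y) (hq : q ∈ Y \ X) (hXq : X ∈ Bmax (restrict B ((X ∪ Y).erase q)))
    (hYp : Y ∈ Bmax (restrict B ((X ∪ Y).erase p))) :
    ∃ N, IsNested B N ∧ MaxNested B (insert X N) ∧ MaxNested B (insert Y N) ∧
      (X ∪ Y ≠ S → X ∪ Y ∈ N) ∧ Bmax (restrict B (X ∩ Y)) ⊆ N := by
  obtain ⟨hpX, hpY⟩ := mem_sdiff.1 hp
  have hXB := (mem_Bmax_restrict.1 hXq).1
  have hYB := (mem_Bmax_restrict.1 hYp).1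
  have hXV : X ⊂ X ∪ Y := ssubset_of_subset_of_ne subset_union_left fun h =>
    (mem_sdiff.1 hq).2 (h ▸ mem_union_right X (mem_sdiff.1 hq).1)
  obtain ⟨W, hW, hXW, hVW, hpW, hqW, hWcard⟩ := exists_isNested_chain_privPart hb hconn hXB
    (hb.union_mem hXB hYB hXY) hXV hpX (mem_sdiff.2 ⟨mem_union_right X (mem_sdiff.1 hq).1,
      (mem_sdiff.1 hq).2⟩)
  have hSW : S ∉ W := fun h => hW.ne_of_mem hconn h rfl
  have hScard : S.card ≤ W.card + 1 :=
    card_insert_of_notMem hSW ▸ card_le_of_card_privPart_le_one hWcard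
  have hN := hW.subset (erase_subset X W)
  have hVN : X ∪ Y ≠ S → X ∪ Y ∈ W.erase X := fun hVS => mem_erase.2 ⟨hXV.ne', hVW hVS⟩
  have hYN := hN.insert_of_mem_Bmax_restrict hb hconn (L := X ∪ Y) (by
      by_cases hVS : X ∪ Y = S
      exacts [hVS ▸ mem_insert_self _ _, mem_insert_of_mem (hVN hVS)])
    (hW.mem_privPart_erase hXW hpW hqW hXq (mem_union_left Y hpX)) hYp
  have hYW : Y ∉ W.erase X := fun h => by
    rcases hW.2.1 X hXW Y (mem_of_mem_erase h) with h | h | h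
    exacts [hpY (h hpX), (mem_sdiff.1 hq).2 (h (mem_sdiff.1 hq).1), hXY.ne_empty h]
  have hNcard := card_erase_add_one hXW
  refine ⟨W.erase X, hN, ?_, hYN.maxNested hb hconn ?_, hVN, fun E hE => mem_erase.2 ⟨?_,
    hW.mem_of_mem_Bmax_restrict_inter hb hpW (hWcard X (mem_insert_of_mem hXW)) hpY hYp hE⟩⟩
  · rw [insert_erase hXW]
    exact hW.maxNested hb hconn hScard
  · rw [card_insert_of_notMem hYW]
    omega
  · rintro rfl
    exact hpY (((mem_Bmax_restrict.1 hE).2.1.trans inter_subset_right) hpX)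

end Flip

structure IsBadPair (S : Finset ℕ) (B : Finset (Finset ℕ)) (X Y : Finset ℕ) : Prop where
  left_mem : X ∈ B
  right_mem : Y ∈ B
  inter_nonempty : (X ∩ Y).Nonempty
  not_left_subset : ¬X ⊆ Y
  not_right_subset : ¬Y ⊆ X
  inter_notMem : X ∩ Y ∉ B
  union_ne_or : X ∪ Y ≠ S ∨ 3 ≤ (Bmax (restrict B (X ∩ Y))).card

namespace IsBadPair

variable {S : Finset ℕ} {B : Finset (Finset ℕ)} {X Y : Finset ℕ}

lemma symm (h : IsBadPair S B X Y) : IsBadPair S B Y X where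
  left_mem := h.right_mem
  right_mem := h.left_mem
  inter_nonempty := inter_comm X Y ▸ h.inter_nonempty
  not_left_subset := h.not_right_subset
  not_right_subset := h.not_left_subset
  inter_notMem := inter_comm X Y ▸ h.inter_notMem
  union_ne_or := by rw [union_comm, inter_comm]; exact h.union_ne_or

lemma exists_extremal (h : IsBadPair S B X Y) :
    ∃ X Y, IsBadPair S B X Y ∧
      (∀ X' Y', IsBadPair S B X' Y' → (X ∪ Y).card ≤ (X' ∪ Y').card) ∧
      ∀ X' Y', IsBadPair S B X' Y' → X' ∪ Y' = X ∪ Y → X'.card + Y'.card ≤ X.card + Y.card := by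
  classical
  set P := (B ×ˢ B).filter fun z => IsBadPair S B z.1 z.2
  have memP {X Y} (h : IsBadPair S B X Y) : (X, Y) ∈ P :=
    mem_filter.2 ⟨mem_product.2 ⟨h.left_mem, h.right_mem⟩, h⟩
  obtain ⟨z₁, hz₁, hmin⟩ := exists_min_image P (fun z => (z.1 ∪ z.2).card) ⟨_, memP h⟩
  obtain ⟨z, hz, hmax⟩ := exists_max_image (P.filter fun z => z.1 ∪ z.2 = z₁.1 ∪ z₁.2)
    (fun z => z.1.card + z.2.card) ⟨z₁, mem_filter.2 ⟨hz₁, rfl⟩⟩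
  obtain ⟨hzP, hzU⟩ := mem_filter.1 hz
  exact ⟨z.1, z.2, (mem_filter.1 hzP).2, fun X' Y' h' => hzU ▸ hmin _ (memP h'),
    fun X' Y' h' hU => hmax (X', Y') (mem_filter.2 ⟨memP h', hU.trans hzU⟩)⟩

lemma mem_Bmax_restrict_erase (hb : IsBuilding S B) (h : IsBadPair S B X Y)
    (hmin : ∀ X' Y', IsBadPair S B X' Y' → (X ∪ Y).card ≤ (X' ∪ Y').card)
    (hmax : ∀ X' Y', IsBadPair S B X' Y' → X' ∪ Y' = X ∪ Y → X'.card + Y'.card ≤ X.card + Y.card)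
    {q : ℕ} (hq : q ∈ Y \ X) : X ∈ Bmax (restrict B ((X ∪ Y).erase q)) := by
  obtain ⟨hqY, hqX⟩ := mem_sdiff.1 hq
  refine mem_Bmax_restrict.2 ⟨h.left_mem, subset_erase.2 ⟨subset_union_left, hqX⟩,
    fun K hK hXK hKV => ?_⟩
  have hqK : q ∉ K := (subset_erase.1 hKV).2
  -- `X ∪ Z ⊆ (X ∪ Y) \ {q}` is smaller than `X ∪ Y`, so `(X, Z)` is not a bad pair.
  have not_bad : ∀ Z ∈ B, Z ⊆ K ∩ Y → (X ∩ Z).Nonempty → ¬Z ⊆ X → X ∩ Z ∉ B → False := by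
    intro Z hZ hZKY hXZ hZX hXZB
    have hXZV : X ∪ Z ⊂ X ∪ Y := (union_subset hXK (hZKY.trans inter_subset_left)).trans hKV
      |>.trans_ssubset (erase_ssubset (mem_union_right X hqY))
    refine (card_lt_card hXZV).not_ge (hmin X Z ⟨h.left_mem, hZ, hXZ,
      fun hXZ' => h.not_left_subset (hXZ'.trans (hZKY.trans inter_subset_right)), hZX, hXZB,
      Or.inl fun hXZS => ?_⟩)
    have hqXZ : q ∈ X ∪ Z := hXZS ▸ hb.subset_of_mem h.right_mem hqY
    exact (mem_union.1 hqXZ).elim hqX fun hqZ => hqK ((hZKY.trans inter_subset_left) hqZ)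
  have hXKY : X ∩ (K ∩ Y) = X ∩ Y := by rw [← inter_assoc, inter_eq_left.2 hXK]
  have hKY : K ∩ Y ∉ B := fun hKYB => not_bad _ hKYB subset_rfl (hXKY ▸ h.inter_nonempty)
    (fun hKYX => h.inter_notMem (Subset.antisymm (subset_inter hKYX inter_subset_right)
      (inter_subset_inter_right hXK) ▸ hKYB)) (hXKY ▸ h.inter_notMem)
  have hU : K ∪ Y = X ∪ Y := Subset.antisymm
    (union_subset (hKV.trans (erase_subset _ _)) subset_union_right) (union_subset_union_left hXK)
  have hbad : IsBadPair S B K Y := by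
    refine ⟨hK, h.right_mem, h.inter_nonempty.mono (inter_subset_inter_right hXK),
      fun hKY' => h.not_left_subset (hXK.trans hKY'), fun hYK => hqK (hYK hqY), hKY, ?_⟩
    rw [hU]
    refine h.union_ne_or.imp_right fun h3 => ?_
    by_contra! hlt
    obtain ⟨E, hE, hXE, hEX, hXEB⟩ :=
      hb.exists_mem_Bmax_restrict_not_subset hXK (hlt.trans_le h3)
    exact not_bad E (mem_Bmax_restrict.1 hE).1 (mem_Bmax_restrict.1 hE).2.1 hXE hEX hXEB
  exact (eq_of_subset_of_card_le hXK (by have := hmax K Y hbad hU; omega))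

lemma exists_mem_Bmax_restrict_erase {X₀ Y₀ : Finset ℕ} (hb : IsBuilding S B)
    (h : IsBadPair S B X₀ Y₀) :
    ∃ X Y, IsBadPair S B X Y ∧ (∀ q ∈ Y \ X, X ∈ Bmax (restrict B ((X ∪ Y).erase q))) ∧
      ∀ p ∈ X \ Y, Y ∈ Bmax (restrict B ((X ∪ Y).erase p)) := by
  obtain ⟨X, Y, h, hmin, hmax⟩ := h.exists_extremal
  refine ⟨X, Y, h, fun q hq => h.mem_Bmax_restrict_erase hb hmin hmax hq, fun p hp => ?_⟩
  rw [union_comm]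
  refine h.symm.mem_Bmax_restrict_erase hb (fun X' Y' h' => union_comm X Y ▸ hmin X' Y' h')
    (fun X' Y' h' hU => ?_) hp
  rw [add_comm Y.card]
  exact hmax X' Y' h' (hU.trans (union_comm Y X))

end IsBadPair

section Relation

lemma eSet_union_add_eSet_inter (n : ℕ) (X Y : Finset ℕ) :
    eSet n (X ∪ Y) + eSet n (X ∩ Y) = eSet n X + eSet n Y :=
  sum_union_inter

lemma eSet_Icc (n : ℕ) : eSet n (Icc 1 (n + 1)) = 0 := by
  funext j
  have h : ∀ i, eVec n i j = (if i = (j : ℕ) + 1 then 1 else 0) - (if i = n + 1 then 1 else 0) := by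
    intro i
    simp only [eVec]
    split_ifs <;> first | omega | norm_num
  simp only [eSet, Finset.sum_apply, Pi.zero_apply, h, sum_sub_distrib, sum_ite_eq', mem_Icc]
  simp

lemma IsBuilding.sum_eSet_Bmax_restrict {S : Finset ℕ} {B : Finset (Finset ℕ)} {T : Finset ℕ}
    (hb : IsBuilding S B) (hT : T ⊆ S) (n : ℕ) :
    ∑ D ∈ Bmax (restrict B T), eSet n D = eSet n T := by
  conv_rhs => rw [← hb.biUnion_Bmax_restrict hT]
  exact (sum_biUnion fun D hD D' hD' hne => hb.disjoint_of_mem_Bmax_restrict hD hD' hne).symm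

lemma exists_int_coeffs {E : Type*} [AddCommGroup E] [Module ℝ E] {N R : Finset (Finset ℕ)}
    {f : Finset ℕ → E} {v : E} (hRN : R ⊆ N) (hv : v = ∑ J ∈ R, f J) (hR : 3 ≤ R.card) :
    ∃ a : Finset ℕ → ℤ, v + ∑ J ∈ N, (a J : ℝ) • f J = 0 ∧ 2 + ∑ J ∈ N, a J ≤ -1 := by
  classical
  refine ⟨fun J => if J ∈ R then -1 else 0, ?_, ?_⟩
  · have hterm (J : Finset ℕ) :
        ((if J ∈ R then -1 else 0 : ℤ) : ℝ) • f J = if J ∈ R then -f J else 0 := by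
      split_ifs <;> simp
    rw [sum_congr rfl fun J _ => hterm J, sum_ite_mem, inter_eq_right.2 hRN, sum_neg_distrib, hv,
      add_neg_cancel]
  · rw [sum_ite_mem, inter_eq_right.2 hRN, sum_const, smul_neg, nsmul_one]
    omega

end Relation

/-- Direction (1) ⇒ (2) of the main theorem, combinatorially: if the building-set
condition fails, some torus-invariant curve has anticanonical degree ≤ -1. -/
theorem stmt_2 (n : ℕ) (B : Finset (Finset ℕ))
    (hB : IsBuilding (Finset.Icc 1 (n + 1)) B)
    (hconn : Bmax B = {Finset.Icc 1 (n + 1)})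
    (I₁ I₂ : Finset ℕ) (hI₁ : I₁ ∈ B) (hI₂ : I₂ ∈ B)
    (hint : (I₁ ∩ I₂).Nonempty) (h12 : ¬I₁ ⊆ I₂) (h21 : ¬I₂ ⊆ I₁)
    (hcap : I₁ ∩ I₂ ∉ B)
    (hbad : I₁ ∪ I₂ ≠ Finset.Icc 1 (n + 1) ∨
      3 ≤ (Bmax (restrict B (I₁ ∩ I₂))).card) :
    ∃ N : Finset (Finset ℕ), IsNested B N ∧
      ∃ J₁ ∈ B, ∃ J₂ ∈ B, J₁ ≠ J₂ ∧
        J₁ ≠ Finset.Icc 1 (n + 1) ∧ J₂ ≠ Finset.Icc 1 (n + 1) ∧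
        MaxNested B (insert J₁ N) ∧ MaxNested B (insert J₂ N) ∧
        ∃ a : Finset ℕ → ℤ,
          eSet n J₁ + eSet n J₂ + ∑ J ∈ N, (a J : ℝ) • eSet n J = 0 ∧
          2 + ∑ J ∈ N, a J ≤ -1 := by
  obtain ⟨X, Y, h, hX, hY⟩ :=
    (IsBadPair.mk hI₁ hI₂ hint h12 h21 hcap hbad).exists_mem_Bmax_restrict_erase hB
  obtain ⟨q, hqY, hqX⟩ := not_subset.1 h.not_right_subset
  obtain ⟨p, hpX, hpY⟩ := not_subset.1 h.not_left_subset
  have hp : p ∈ X \ Y := mem_sdiff.2 ⟨hpX, hpY⟩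
  have hq : q ∈ Y \ X := mem_sdiff.2 ⟨hqY, hqX⟩
  obtain ⟨N, hN, hXN, hYN, hVN, hCN⟩ :=
    exists_maxNested_insert_pair hB hconn h.inter_nonempty hp hq (hX q hq) (hY p hp)
  refine ⟨N, hN, X, h.left_mem, Y, h.right_mem, fun hXY => hqX (hXY ▸ hqY),
    fun hXS => hqX (hXS ▸ hB.subset_of_mem h.right_mem hqY),
    fun hYS => hpY (hYS ▸ hB.subset_of_mem h.left_mem hpX), hXN, hYN, ?_⟩
  have hXYS : X ∩ Y ⊆ Icc 1 (n + 1) := inter_subset_left.trans (hB.subset_of_mem h.left_mem)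
  have hC := hB.sum_eSet_Bmax_restrict hXYS n
  rw [← eSet_union_add_eSet_inter, ← hC]
  by_cases hV : X ∪ Y = Icc 1 (n + 1)
  · rw [hV, eSet_Icc, zero_add]
    exact exists_int_coeffs hCN rfl (h.union_ne_or.resolve_left (not_not.2 hV))
  · have hVC : X ∪ Y ∉ Bmax (restrict B (X ∩ Y)) := fun hmem => h.not_left_subset
      (subset_union_left.trans ((mem_Bmax_restrict.1 hmem).2.1.trans inter_subset_right))
    have h2 := hB.two_le_card_Bmax_restrict hXYS h.inter_nonempty h.inter_notMem
    exact exists_int_coeffs (insert_subset (hVN hV) hCN) (sum_insert hVC).symm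
      (by rw [card_insert_of_notMem hVC]; omega)
end

section
/- Let B be a connected building set on S and let I_1, I_2 ∈ B with I_1 ∩ I_2 ≠ ∅, I_1 ⊄ I_2, I_2 ⊄ I_1 and I_1 ∩ I_2 ∉ B. Then there exist J_1, J_2 ∈ B, j_1 ∈ J_1 \ J_2, j_2 ∈ J_2 \ J_1, a maximal nested set N of B|_{J_1 ∩ J_2}, and a maximal nested set N′ of B|_{(J_1 △ J_2) \ {j_1, j_2}} (with N′ and (B|_{(J_1 △ J_2) \ {j_1, j_2}})_max understood to be empty if J_1 △ J_2 = {j_1, j_2}), such that J_1 ∩ J_2 ≠ ∅, J_1 ∩ J_2 ∉ B, J_1 ∪ J_2 ⊆ I_1 ∪ I_2, and for each k = 1, 2 the set {J_k} ∪ N ∪ (B|_{J_1 ∩ J_2})_max ∪ N′ ∪ (B|_{(J_1 △ J_2) \ {j_1, j_2}})_max is a nested set of B. -/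
/-!
Among the pairs `J₁, J₂ ∈ B` with `J₁ ∪ J₂ ⊆ I₁ ∪ I₂` whose intersection is nonempty and not in
`B`, take one with minimal union and, among those, maximal intersection. Let `j₁ ∈ J₁ \ J₂`.
A member `Y ∈ B` with `Y ⊆ J₁ ∪ J₂` and `j₁ ∉ Y` cannot meet both `J₁ \ J₂` and `J₂`: otherwise
`Z = J₁ ∩ (Y ∪ J₂)` is in `B` by maximality of the intersection, and `(Z, J₂)` is an admissible
pair whose union misses `j₁`, contradicting minimality. Consequently every member of `B` inside
`(J₁ ∪ J₂) \ {j₁, j₂}` lies in `J₁ ∩ J₂`, in `J₁ \ J₂` or in `J₂ \ J₁`, and `J₁ ∪ V ∉ B` for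
nonempty `V ⊆ (J₂ \ J₁) \ {j₂}`; these are exactly what makes the union of `{J₁}` with the two
maximal nested sets and the maximal elements of the two restrictions a nested set of `B`.
-/

open Finset

/-- `IsNested` without the condition `N ⊆ B \ Bmax B`, so that `IsNested B N` unfolds to
`N ⊆ B \ Bmax B ∧ IsNestedFamily B N`. -/
def IsNestedFamily (B G : Finset (Finset ℕ)) : Prop :=
  (∀ I ∈ G, ∀ J ∈ G, I ⊆ J ∨ J ⊆ I ∨ I ∩ J = ∅) ∧
  (∀ F ⊆ G, 2 ≤ F.card → (∀ I ∈ F, ∀ J ∈ F, I ≠ J → I ∩ J = ∅) → F.sup id ∉ B)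

lemma mem_restrict {B : Finset (Finset ℕ)} {C I : Finset ℕ} :
    I ∈ restrict B C ↔ I ∈ B ∧ I ⊆ C :=
  mem_filter

lemma mem_Bmax {B : Finset (Finset ℕ)} {I : Finset ℕ} :
    I ∈ Bmax B ↔ I ∈ B ∧ ∀ J ∈ B, I ⊆ J → I = J :=
  mem_filter

lemma isNested_empty (B : Finset (Finset ℕ)) : IsNested B ∅ :=
  ⟨empty_subset _, by simp, fun F hF hcard _ => by simp [subset_empty.mp hF] at hcard⟩

lemma exists_maxNested (B : Finset (Finset ℕ)) : ∃ N, MaxNested B N := by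
  classical
  obtain ⟨N, hN, hmax⟩ := ((B \ Bmax B).powerset.filter (IsNested B)).exists_maximal
    ⟨∅, mem_filter.mpr ⟨empty_mem_powerset _, isNested_empty B⟩⟩
  refine ⟨N, (mem_filter.mp hN).2, fun N' hN' hsub => ?_⟩
  exact hsub.antisymm (hmax (mem_filter.mpr ⟨mem_powerset.mpr hN'.1, hN'⟩) hsub)

lemma subset_sdiff_Bmax {S : Finset ℕ} {B G : Finset (Finset ℕ)} (hconn : Bmax B = {S})
    {j : ℕ} (hjS : j ∈ S) (hG : ∀ X ∈ G, X ∈ B ∧ j ∉ X) : G ⊆ B \ Bmax B := fun X hX =>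
  mem_sdiff.mpr ⟨(hG X hX).1, fun hXS => (hG X hX).2 (mem_singleton.mp (hconn ▸ hXS) ▸ hjS)⟩

lemma IsBuilding.restrict_union_mem {S C : Finset ℕ} {B : Finset (Finset ℕ)}
    (hB : IsBuilding S B) :
    ∀ I ∈ restrict B C, ∀ J ∈ restrict B C, (I ∩ J).Nonempty → I ∪ J ∈ restrict B C := by
  simp only [mem_restrict]
  exact fun I hI J hJ hIJ => ⟨hB.2.1 I hI.1 J hJ.1 hIJ, union_subset hI.2 hJ.2⟩

section NestedFamily

variable {B G N : Finset (Finset ℕ)}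

lemma subset_of_inter_nonempty_of_mem_Bmax
    (hclosed : ∀ I ∈ B, ∀ J ∈ B, (I ∩ J).Nonempty → I ∪ J ∈ B)
    {I M : Finset ℕ} (hI : I ∈ B) (hM : M ∈ Bmax B) (hIM : (I ∩ M).Nonempty) : I ⊆ M := by
  rw [mem_Bmax] at hM
  rw [hM.2 _ (hclosed I hI M hM.1 hIM) subset_union_right]
  exact subset_union_left

lemma IsNested.mem_of_mem_union_Bmax (hN : IsNested B N) {X : Finset ℕ}
    (hX : X ∈ N ∪ Bmax B) : X ∈ B := by
  rcases mem_union.mp hX with h | h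
  · exact (mem_sdiff.mp (hN.1 h)).1
  · exact (mem_Bmax.mp h).1

lemma IsNested.isNestedFamily_union_Bmax
    (hclosed : ∀ I ∈ B, ∀ J ∈ B, (I ∩ J).Nonempty → I ∪ J ∈ B)
    (hne : ∀ I ∈ B, I.Nonempty) (hN : IsNested B N) : IsNestedFamily B (N ∪ Bmax B) := by
  have absorb := @subset_of_inter_nonempty_of_mem_Bmax B hclosed
  refine ⟨fun I hI J hJ => ?_, fun F hF hcard hdisj hsup => ?_⟩
  · by_cases hIJ : I ∩ J = ∅
    · exact Or.inr (Or.inr hIJ)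
    rw [← ne_eq, ← nonempty_iff_ne_empty] at hIJ
    rcases mem_union.mp hJ with hJN | hJM
    · rcases mem_union.mp hI with hIN | hIM
      · exact hN.2.1 I hIN J hJN
      · exact Or.inr (Or.inl (absorb (hN.mem_of_mem_union_Bmax hJ) hIM (by rwa [inter_comm])))
    · exact Or.inl (absorb (hN.mem_of_mem_union_Bmax hI) hJM hIJ)
  by_cases hFM : ∃ M ∈ F, M ∈ Bmax B
  · -- a maximal member would have to be the whole union, leaving no room for the others
    obtain ⟨M, hMF, hMmax⟩ := hFM
    obtain ⟨X, hXF, hXM⟩ := exists_mem_ne (s := F) (by omega) M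
    have hXne := hne X (hN.mem_of_mem_union_Bmax (hF hXF))
    have hMsup : M = F.sup id := (mem_Bmax.mp hMmax).2 _ hsup (le_sup (f := id) hMF)
    have hXsub : X ⊆ M := hMsup ▸ le_sup (f := id) hXF
    exact hXne.ne_empty (inter_eq_left.mpr hXsub ▸ hdisj X hXF M hMF hXM)
  · push Not at hFM
    refine hN.2.2 F (fun X hX => ?_) hcard hdisj hsup
    exact (mem_union.mp (hF hX)).resolve_right (hFM X hX)

lemma IsNestedFamily.of_restrict {C : Finset ℕ} (h : IsNestedFamily (restrict B C) G)
    (hG : ∀ X ∈ G, X ⊆ C) : IsNestedFamily B G :=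
  ⟨h.1, fun F hF hcard hdisj hsup =>
    h.2 F hF hcard hdisj (mem_restrict.mpr ⟨hsup, Finset.sup_le fun X hX => hG X (hF hX)⟩)⟩

lemma IsNested.isNestedFamily_union_Bmax_restrict {S C : Finset ℕ} (hB : IsBuilding S B)
    (hN : IsNested (restrict B C) N) : IsNestedFamily B (N ∪ Bmax (restrict B C)) :=
  (hN.isNestedFamily_union_Bmax hB.restrict_union_mem
    fun I hI => (hB.1 I (mem_restrict.mp hI).1).2).of_restrict
    fun _ hX => (mem_restrict.mp (hN.mem_of_mem_union_Bmax hX)).2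

lemma IsNestedFamily.union {G₁ G₂ : Finset (Finset ℕ)} {A D : Finset ℕ}
    (h₁ : IsNestedFamily B G₁) (h₂ : IsNestedFamily B G₂)
    (hG₁ : ∀ X ∈ G₁, X.Nonempty ∧ X ⊆ A) (hG₂ : ∀ X ∈ G₂, X.Nonempty ∧ X ⊆ D)
    (hAD : Disjoint A D) (hsplit : ∀ Y ∈ B, Y ⊆ A ∪ D → Y ⊆ A ∨ Y ⊆ D) :
    IsNestedFamily B (G₁ ∪ G₂) := by
  have cross : ∀ I ∈ G₁, ∀ J ∈ G₂, I ∩ J = ∅ := fun I hI J hJ =>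
    disjoint_iff_inter_eq_empty.mp (hAD.mono (hG₁ I hI).2 (hG₂ J hJ).2)
  refine ⟨fun I hI J hJ => ?_, fun F hF hcard hdisj hsup => ?_⟩
  · rcases mem_union.mp hI with hI | hI <;> rcases mem_union.mp hJ with hJ | hJ
    · exact h₁.1 I hI J hJ
    · exact Or.inr (Or.inr (cross I hI J hJ))
    · exact Or.inr (Or.inr (inter_comm I J ▸ cross J hJ I hI))
    · exact h₂.1 I hI J hJ
  have hsupAD : F.sup id ⊆ A ∪ D := Finset.sup_le fun X hX => by
    rcases mem_union.mp (hF hX) with h | h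
    · exact (hG₁ X h).2.trans subset_union_left
    · exact (hG₂ X h).2.trans subset_union_right
  -- the union lies on one side, and then so does every member
  have onSide : ∀ {G' G'' : Finset (Finset ℕ)} {C C' : Finset ℕ}, F ⊆ G' ∪ G'' →
      Disjoint C C' → (∀ X ∈ G'', X.Nonempty ∧ X ⊆ C') → F.sup id ⊆ C → F ⊆ G' :=
    fun hF hCC' hG'' hC X hX => (mem_union.mp (hF hX)).resolve_right fun h =>
      (hG'' X h).1.ne_empty (disjoint_self_iff_empty X |>.mp
        (hCC'.mono ((le_sup (f := id) hX).trans hC) (hG'' X h).2))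
  rcases hsplit _ hsup hsupAD with hA | hD
  · exact h₁.2 F (onSide hF hAD hG₂ hA) hcard hdisj hsup
  · exact h₂.2 F (onSide (union_comm G₁ G₂ ▸ hF) hAD.symm hG₁ hD) hcard hdisj hsup

lemma IsNestedFamily.insert {J : Finset ℕ} (h : IsNestedFamily B G)
    (hJG : ∀ X ∈ G, X ⊆ J ∨ X ∩ J = ∅)
    (hunion : ∀ F ⊆ G, F.Nonempty → (∀ X ∈ F, X ∩ J = ∅) → J ∪ F.sup id ∉ B) :
    IsNestedFamily B (insert J G) := by
  classical
  refine ⟨fun X hX Y hY => ?_, fun F hF hcard hdisj hsup => ?_⟩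
  · rcases mem_insert.mp hX with rfl | hXG <;> rcases mem_insert.mp hY with rfl | hYG
    · exact Or.inl subset_rfl
    · exact (hJG Y hYG).elim (Or.inr ∘ Or.inl) fun h => Or.inr (Or.inr (inter_comm X Y ▸ h))
    · exact (hJG X hXG).elim Or.inl (Or.inr ∘ Or.inr)
    · exact h.1 X hXG Y hYG
  by_cases hJF : J ∈ F
  · refine hunion (F.erase J) (fun X hX => ?_) ?_ (fun X hX => ?_) ?_
    · exact (mem_insert.mp (hF (mem_of_mem_erase hX))).resolve_left (ne_of_mem_erase hX)
    · exact card_pos.mp (by rw [card_erase_of_mem hJF]; omega)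
    · exact hdisj X (mem_of_mem_erase hX) J hJF (ne_of_mem_erase hX)
    · rwa [← insert_erase hJF, sup_insert] at hsup
  · exact h.2 F (fun X hX => (mem_insert.mp (hF hX)).resolve_left (ne_of_mem_of_not_mem hX hJF))
      hcard hdisj hsup

end NestedFamily

structure IsExtremalPair (B : Finset (Finset ℕ)) (J₁ J₂ : Finset ℕ) : Prop where
  left_mem : J₁ ∈ B
  right_mem : J₂ ∈ B
  inter_nonempty : (J₁ ∩ J₂).Nonempty
  inter_not_mem : J₁ ∩ J₂ ∉ B
  union_minimal : ∀ K₁ ∈ B, ∀ K₂ ∈ B, (K₁ ∩ K₂).Nonempty → K₁ ∩ K₂ ∉ B →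
    K₁ ∪ K₂ ⊆ J₁ ∪ J₂ → K₁ ∪ K₂ = J₁ ∪ J₂
  inter_maximal : ∀ K₁ ∈ B, ∀ K₂ ∈ B, (K₁ ∩ K₂).Nonempty → K₁ ∪ K₂ = J₁ ∪ J₂ →
    J₁ ∩ J₂ ⊂ K₁ ∩ K₂ → K₁ ∩ K₂ ∈ B

lemma exists_isExtremalPair {B : Finset (Finset ℕ)} {I₁ I₂ : Finset ℕ} (hI₁ : I₁ ∈ B)
    (hI₂ : I₂ ∈ B) (hint : (I₁ ∩ I₂).Nonempty) (hcap : I₁ ∩ I₂ ∉ B) :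
    ∃ J₁ J₂, IsExtremalPair B J₁ J₂ ∧ J₁ ∪ J₂ ⊆ I₁ ∪ I₂ := by
  classical
  set s := (B ×ˢ B).filter
    fun p => (p.1 ∩ p.2).Nonempty ∧ p.1 ∩ p.2 ∉ B ∧ p.1 ∪ p.2 ⊆ I₁ ∪ I₂
  have mem_s : ∀ {K₁ K₂}, K₁ ∈ B → K₂ ∈ B → (K₁ ∩ K₂).Nonempty → K₁ ∩ K₂ ∉ B →
      K₁ ∪ K₂ ⊆ I₁ ∪ I₂ → (K₁, K₂) ∈ s :=
    fun h₁ h₂ hne hnot hsub => mem_filter.mpr ⟨mem_product.mpr ⟨h₁, h₂⟩, hne, hnot, hsub⟩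
  -- minimize the union first, then maximize the intersection
  let f : Finset ℕ × Finset ℕ → ℕ ×ₗ ℕᵒᵈ :=
    fun p => toLex ((p.1 ∪ p.2).card, OrderDual.toDual (p.1 ∩ p.2).card)
  obtain ⟨⟨J₁, J₂⟩, hJ, hmin⟩ := s.exists_min_image f ⟨_, mem_s hI₁ hI₂ hint hcap subset_rfl⟩
  obtain ⟨hJB, hne, hnot, hsub⟩ := mem_filter.mp hJ
  refine ⟨J₁, J₂, ⟨(mem_product.mp hJB).1, (mem_product.mp hJB).2, hne, hnot, ?_, ?_⟩, hsub⟩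
  · intro K₁ h₁ K₂ h₂ hKne hKnot hKsub
    by_contra hKU
    refine (hmin _ (mem_s h₁ h₂ hKne hKnot (hKsub.trans hsub))).not_gt (Prod.Lex.lt_iff.mpr ?_)
    exact Or.inl (card_lt_card (_root_.ssubset_iff_subset_ne.mpr ⟨hKsub, hKU⟩))
  · intro K₁ h₁ K₂ h₂ hKne hKU hKcap
    by_contra hKnot
    refine (hmin _ (mem_s h₁ h₂ hKne hKnot (hKU ▸ hsub))).not_gt (Prod.Lex.lt_iff.mpr ?_)
    exact Or.inr ⟨by simp [f, hKU], card_lt_card hKcap⟩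

namespace IsExtremalPair

variable {B : Finset (Finset ℕ)} {J₁ J₂ : Finset ℕ}

lemma symm (h : IsExtremalPair B J₁ J₂) : IsExtremalPair B J₂ J₁ where
  left_mem := h.right_mem
  right_mem := h.left_mem
  inter_nonempty := inter_comm J₁ J₂ ▸ h.inter_nonempty
  inter_not_mem := inter_comm J₁ J₂ ▸ h.inter_not_mem
  union_minimal := by simpa only [union_comm J₂ J₁] using h.union_minimal
  inter_maximal := by simpa only [union_comm J₂ J₁, inter_comm J₂ J₁] using h.inter_maximal

lemma sdiff_nonempty (h : IsExtremalPair B J₁ J₂) : (J₁ \ J₂).Nonempty := by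
  rw [Finset.sdiff_nonempty]
  exact fun hsub => h.inter_not_mem (by rw [inter_eq_left.mpr hsub]; exact h.left_mem)

lemma disjoint_of_meets_sdiff (hclosed : ∀ I ∈ B, ∀ J ∈ B, (I ∩ J).Nonempty → I ∪ J ∈ B)
    (h : IsExtremalPair B J₁ J₂) {j : ℕ} (hj : j ∈ J₁ \ J₂) {Y : Finset ℕ} (hY : Y ∈ B)
    (hYU : Y ⊆ J₁ ∪ J₂) (hjY : j ∉ Y) (hmeet : (Y ∩ (J₁ \ J₂)).Nonempty) : Disjoint Y J₂ := by
  rw [disjoint_iff_inter_eq_empty, ← not_nonempty_iff_eq_empty]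
  intro hYJ₂
  obtain ⟨x, hx⟩ := hmeet
  set Z := J₁ ∩ (Y ∪ J₂)
  have hAZ : J₁ ∩ J₂ ⊆ Z := inter_subset_inter subset_rfl subset_union_right
  have hZ : Z ∈ B := by
    refine h.inter_maximal J₁ h.left_mem (Y ∪ J₂) (hclosed Y hY J₂ h.right_mem hYJ₂)
      (h.inter_nonempty.mono hAZ) ?_ ((ssubset_iff_of_subset hAZ).mpr ⟨x, ?_, ?_⟩)
    · rw [union_left_comm, union_eq_right.mpr hYU]
    · simp_all [Z]
    · simp_all
  have hZJ₂ : Z ∩ J₂ = J₁ ∩ J₂ := by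
    ext a
    simp only [Z, mem_inter, mem_union]
    tauto
  have hU := h.union_minimal Z hZ J₂ h.right_mem (hZJ₂ ▸ h.inter_nonempty)
    (hZJ₂ ▸ h.inter_not_mem) (union_subset (inter_subset_left.trans subset_union_left)
      subset_union_right)
  have hjZ : j ∈ Z ∪ J₂ := hU ▸ mem_union_left _ (mem_sdiff.mp hj).1
  simp only [Z, mem_union, mem_inter] at hjZ
  have := mem_sdiff.mp hj
  tauto

lemma union_not_mem (hclosed : ∀ I ∈ B, ∀ J ∈ B, (I ∩ J).Nonempty → I ∪ J ∈ B)
    (h : IsExtremalPair B J₁ J₂) {j : ℕ} (hj : j ∈ J₂ \ J₁) {V : Finset ℕ}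
    (hVU : V ⊆ J₁ ∪ J₂) (hjV : j ∉ V) (hV : (V \ J₁).Nonempty) : J₁ ∪ V ∉ B := by
  intro hmem
  obtain ⟨v, hv⟩ := hV
  have hvU := hVU (mem_sdiff.mp hv).1
  have hdisj := h.symm.disjoint_of_meets_sdiff hclosed hj hmem
    (union_comm J₁ J₂ ▸ union_subset subset_union_left hVU) (by simp_all)
    ⟨v, by simp only [mem_inter, mem_union, mem_sdiff] at hv hvU ⊢; tauto⟩
  obtain ⟨a, ha⟩ := h.inter_nonempty
  exact disjoint_left.mp hdisj (mem_union_left V (mem_inter.mp ha).1) (mem_inter.mp ha).1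

lemma subset_inter_or_subset_sdiff
    (hclosed : ∀ I ∈ B, ∀ J ∈ B, (I ∩ J).Nonempty → I ∪ J ∈ B) (h : IsExtremalPair B J₁ J₂)
    {j₁ j₂ : ℕ} (hj₁ : j₁ ∈ J₁ \ J₂) (hj₂ : j₂ ∈ J₂ \ J₁) {Y : Finset ℕ} (hY : Y ∈ B)
    (hYU : Y ⊆ J₁ ∪ J₂) (hj₁Y : j₁ ∉ Y) (hj₂Y : j₂ ∉ Y) :
    Y ⊆ J₁ ∩ J₂ ∨ Y ⊆ J₁ \ J₂ ∨ Y ⊆ J₂ \ J₁ := by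
  by_cases h₁ : (Y ∩ (J₁ \ J₂)).Nonempty
  · have hY₂ := h.disjoint_of_meets_sdiff hclosed hj₁ hY hYU hj₁Y h₁
    refine Or.inr (Or.inl fun y hy => mem_sdiff.mpr ⟨?_, disjoint_left.mp hY₂ hy⟩)
    exact (mem_union.mp (hYU hy)).resolve_right (disjoint_left.mp hY₂ hy)
  by_cases h₂ : (Y ∩ (J₂ \ J₁)).Nonempty
  · have hY₁ := h.symm.disjoint_of_meets_sdiff hclosed hj₂ hY (union_comm J₁ J₂ ▸ hYU) hj₂Y h₂
    refine Or.inr (Or.inr fun y hy => mem_sdiff.mpr ⟨?_, disjoint_left.mp hY₁ hy⟩)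
    exact (mem_union.mp (hYU hy)).resolve_left (disjoint_left.mp hY₁ hy)
  · refine Or.inl fun y hy => ?_
    have hyU := hYU hy
    simp only [not_nonempty_iff_eq_empty, eq_empty_iff_forall_notMem, mem_inter, mem_sdiff,
      mem_union] at h₁ h₂ hyU ⊢
    have := h₁ y
    have := h₂ y
    tauto

lemma subset_inter_or_subset_symmDiff_sdiff
    (hclosed : ∀ I ∈ B, ∀ J ∈ B, (I ∩ J).Nonempty → I ∪ J ∈ B) (h : IsExtremalPair B J₁ J₂)
    {j₁ j₂ : ℕ} (hj₁ : j₁ ∈ J₁ \ J₂) (hj₂ : j₂ ∈ J₂ \ J₁) {Y : Finset ℕ} (hY : Y ∈ B)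
    (hYAD : Y ⊆ J₁ ∩ J₂ ∪ ((J₁ ∪ J₂) \ (J₁ ∩ J₂)) \ {j₁, j₂}) :
    Y ⊆ J₁ ∩ J₂ ∨ Y ⊆ ((J₁ ∪ J₂) \ (J₁ ∩ J₂)) \ {j₁, j₂} := by
  have hYU : Y ⊆ J₁ ∪ J₂ := fun y hy => by
    have := hYAD hy
    simp only [mem_union, mem_inter, mem_sdiff] at this ⊢
    tauto
  have hjY : ∀ {j}, j ∈ ({j₁, j₂} : Finset ℕ) → j ∉ J₁ ∩ J₂ → j ∉ Y := fun hj hjA hjY =>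
    (mem_union.mp (hYAD hjY)).elim hjA fun hjD => (mem_sdiff.mp hjD).2 hj
  have hj₁Y : j₁ ∉ Y := hjY (by simp) fun hj => (mem_sdiff.mp hj₁).2 (mem_inter.mp hj).2
  have hj₂Y : j₂ ∉ Y := hjY (by simp) fun hj => (mem_sdiff.mp hj₂).2 (mem_inter.mp hj).1
  have hYD : ∀ {y}, y ∈ Y → y ∉ J₁ ∩ J₂ → y ∈ ((J₁ ∪ J₂) \ (J₁ ∩ J₂)) \ {j₁, j₂} :=
    fun hy hyA => (mem_union.mp (hYAD hy)).resolve_left hyA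
  rcases h.subset_inter_or_subset_sdiff hclosed hj₁ hj₂ hY hYU hj₁Y hj₂Y with hYA | hY₁ | hY₂
  · exact Or.inl hYA
  · exact Or.inr fun y hy => hYD hy fun hyA => (mem_sdiff.mp (hY₁ hy)).2 (mem_inter.mp hyA).2
  · exact Or.inr fun y hy => hYD hy fun hyA => (mem_sdiff.mp (hY₂ hy)).2 (mem_inter.mp hyA).1

lemma subset_or_inter_eq_empty_of_subset_symmDiff_sdiff
    (hclosed : ∀ I ∈ B, ∀ J ∈ B, (I ∩ J).Nonempty → I ∪ J ∈ B) (h : IsExtremalPair B J₁ J₂)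
    {j₁ j₂ : ℕ} (hj₁ : j₁ ∈ J₁ \ J₂) (hj₂ : j₂ ∈ J₂ \ J₁) {Y : Finset ℕ} (hY : Y ∈ B)
    (hYD : Y ⊆ ((J₁ ∪ J₂) \ (J₁ ∩ J₂)) \ {j₁, j₂}) : Y ⊆ J₁ ∨ Y ∩ J₁ = ∅ := by
  have hjY : ∀ {j}, j ∈ ({j₁, j₂} : Finset ℕ) → j ∉ Y := fun hj hjY =>
    (mem_sdiff.mp (hYD hjY)).2 hj
  rcases h.subset_inter_or_subset_sdiff hclosed hj₁ hj₂ hY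
    (hYD.trans (sdiff_subset.trans sdiff_subset)) (hjY (by simp)) (hjY (by simp))
    with hYA | hY₁ | hY₂
  · exact Or.inl (hYA.trans inter_subset_left)
  · exact Or.inl (hY₁.trans sdiff_subset)
  · exact Or.inr (disjoint_iff_inter_eq_empty.mp (sdiff_disjoint.mono_left hY₂))

lemma union_sup_not_mem (hclosed : ∀ I ∈ B, ∀ J ∈ B, (I ∩ J).Nonempty → I ∪ J ∈ B)
    (hne : ∀ I ∈ B, I.Nonempty) (h : IsExtremalPair B J₁ J₂) {j₁ j₂ : ℕ} (hj₂ : j₂ ∈ J₂ \ J₁)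
    {F : Finset (Finset ℕ)} (hF : ∀ Y ∈ F, Y ∈ B ∧ Y ⊆ ((J₁ ∪ J₂) \ (J₁ ∩ J₂)) \ {j₁, j₂})
    (hFne : F.Nonempty) (hdisj : ∀ X ∈ F, X ∩ J₁ = ∅) : J₁ ∪ F.sup id ∉ B := by
  have hsup : F.sup id ⊆ ((J₁ ∪ J₂) \ (J₁ ∩ J₂)) \ {j₁, j₂} := Finset.sup_le fun Y hY => (hF Y hY).2
  obtain ⟨X, hXF⟩ := hFne
  obtain ⟨x, hx⟩ := hne X (hF X hXF).1
  refine h.union_not_mem hclosed hj₂ (hsup.trans (sdiff_subset.trans sdiff_subset))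
    (fun hj => (mem_sdiff.mp (hsup hj)).2 (by simp))
    ⟨x, mem_sdiff.mpr ⟨le_sup (f := id) hXF hx, fun hx₁ => ?_⟩⟩
  exact notMem_empty x (hdisj X hXF ▸ mem_inter.mpr ⟨hx, hx₁⟩)

theorem isNested_insert_left {S : Finset ℕ} (hB : IsBuilding S B) (hconn : Bmax B = {S})
    (h : IsExtremalPair B J₁ J₂) {j₁ j₂ : ℕ} (hj₁ : j₁ ∈ J₁ \ J₂) (hj₂ : j₂ ∈ J₂ \ J₁)
    {N N' : Finset (Finset ℕ)} (hN : IsNested (restrict B (J₁ ∩ J₂)) N)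
    (hN' : IsNested (restrict B (((J₁ ∪ J₂) \ (J₁ ∩ J₂)) \ {j₁, j₂})) N') :
    IsNested B (insert J₁ (N ∪ Bmax (restrict B (J₁ ∩ J₂)) ∪ N' ∪
      Bmax (restrict B (((J₁ ∪ J₂) \ (J₁ ∩ J₂)) \ {j₁, j₂})))) := by
  set A := J₁ ∩ J₂
  set D := ((J₁ ∪ J₂) \ A) \ {j₁, j₂}
  have hne : ∀ X ∈ B, X.Nonempty := fun X hX => (hB.1 X hX).2
  have memA : ∀ X ∈ N ∪ Bmax (restrict B A), X ∈ B ∧ X ⊆ A :=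
    fun X hX => mem_restrict.mp (hN.mem_of_mem_union_Bmax hX)
  have memD : ∀ X ∈ N' ∪ Bmax (restrict B D), X ∈ B ∧ X ⊆ D :=
    fun X hX => mem_restrict.mp (hN'.mem_of_mem_union_Bmax hX)
  have hj₂D : j₂ ∉ D := by simp [D]
  have hfam := (hN.isNestedFamily_union_Bmax_restrict hB).union
    (hN'.isNestedFamily_union_Bmax_restrict hB)
    (fun X hX => ⟨hne X (memA X hX).1, (memA X hX).2⟩)
    (fun X hX => ⟨hne X (memD X hX).1, (memD X hX).2⟩)
    (disjoint_sdiff.mono_right sdiff_subset)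
    fun Y hY => h.subset_inter_or_subset_symmDiff_sdiff hB.2.1 hj₁ hj₂ hY
  rw [union_assoc (N ∪ _)]
  refine ⟨subset_sdiff_Bmax hconn ((hB.1 J₂ h.right_mem).1 (mem_sdiff.mp hj₂).1) ?_,
    hfam.insert ?_ ?_⟩
  · intro X hX
    rcases mem_insert.mp hX with rfl | hX
    · exact ⟨h.left_mem, (mem_sdiff.mp hj₂).2⟩
    rcases mem_union.mp hX with hXA | hXD
    · exact ⟨(memA X hXA).1, fun hj => (mem_sdiff.mp hj₂).2 (inter_subset_left ((memA X hXA).2 hj))⟩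
    · exact ⟨(memD X hXD).1, fun hj => hj₂D ((memD X hXD).2 hj)⟩
  · intro X hX
    rcases mem_union.mp hX with hXA | hXD
    · exact Or.inl ((memA X hXA).2.trans inter_subset_left)
    · exact h.subset_or_inter_eq_empty_of_subset_symmDiff_sdiff hB.2.1 hj₁ hj₂ (memD X hXD).1
        (memD X hXD).2
  · intro F hF hFne hdisj
    refine h.union_sup_not_mem hB.2.1 hne (j₁ := j₁) hj₂ (fun Y hY => ?_) hFne hdisj
    rcases mem_union.mp (hF hY) with hYA | hYD
    · obtain ⟨y, hy⟩ := hne Y (memA Y hYA).1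
      have hyJ₁ : y ∈ Y ∩ J₁ := mem_inter.mpr ⟨hy, inter_subset_left ((memA Y hYA).2 hy)⟩
      exact absurd (hdisj Y hY ▸ hyJ₁) (notMem_empty y)
    · exact memD Y hYD

end IsExtremalPair

theorem stmt_4_general (S : Finset ℕ) (B : Finset (Finset ℕ))
    (hB : IsBuilding S B) (hconn : Bmax B = {S})
    (I₁ I₂ : Finset ℕ) (hI₁ : I₁ ∈ B) (hI₂ : I₂ ∈ B)
    (hint : (I₁ ∩ I₂).Nonempty)
    (hcap : I₁ ∩ I₂ ∉ B) :
    ∃ J₁ ∈ B, ∃ J₂ ∈ B, ∃ j₁ ∈ J₁ \ J₂, ∃ j₂ ∈ J₂ \ J₁,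
      ∃ N N' : Finset (Finset ℕ),
        MaxNested (restrict B (J₁ ∩ J₂)) N ∧
        MaxNested (restrict B (((J₁ ∪ J₂) \ (J₁ ∩ J₂)) \ {j₁, j₂})) N' ∧
        (J₁ ∩ J₂).Nonempty ∧ J₁ ∩ J₂ ∉ B ∧ J₁ ∪ J₂ ⊆ I₁ ∪ I₂ ∧
        IsNested B (insert J₁ (N ∪ Bmax (restrict B (J₁ ∩ J₂)) ∪ N' ∪
          Bmax (restrict B (((J₁ ∪ J₂) \ (J₁ ∩ J₂)) \ {j₁, j₂})))) ∧
        IsNested B (insert J₂ (N ∪ Bmax (restrict B (J₁ ∩ J₂)) ∪ N' ∪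
          Bmax (restrict B (((J₁ ∪ J₂) \ (J₁ ∩ J₂)) \ {j₁, j₂})))) := by
  obtain ⟨J₁, J₂, hJ, hsub⟩ := exists_isExtremalPair hI₁ hI₂ hint hcap
  obtain ⟨j₁, hj₁⟩ := hJ.sdiff_nonempty
  obtain ⟨j₂, hj₂⟩ := hJ.symm.sdiff_nonempty
  obtain ⟨N, hN⟩ := exists_maxNested (restrict B (J₁ ∩ J₂))
  obtain ⟨N', hN'⟩ := exists_maxNested (restrict B (((J₁ ∪ J₂) \ (J₁ ∩ J₂)) \ {j₁, j₂}))
  refine ⟨J₁, hJ.left_mem, J₂, hJ.right_mem, j₁, hj₁, j₂, hj₂, N, N', hN, hN',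
    hJ.inter_nonempty, hJ.inter_not_mem, hsub, hJ.isNested_insert_left hB hconn hj₁ hj₂ hN.1 hN'.1,
    ?_⟩
  have h₂ := hJ.symm.isNested_insert_left hB hconn hj₂ hj₁ (N := N) (N' := N')
    (by rw [inter_comm]; exact hN.1) (by rw [union_comm, inter_comm, pair_comm]; exact hN'.1)
  rwa [inter_comm J₂, union_comm J₂, pair_comm j₂] at h₂

/-- Lemma: if `I₁ ∩ I₂ ∉ B`, there are `J₁, J₂ ∈ B` with nonempty intersection not in
`B`, union contained in `I₁ ∪ I₂`, and elements `j₁, j₂` and maximal nested sets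
`N, N'` such that both candidate sets are nested sets of `B`. -/
theorem stmt_4 (S : Finset ℕ) (hS : S.Nonempty) (B : Finset (Finset ℕ))
    (hB : IsBuilding S B) (hconn : Bmax B = {S})
    (I₁ I₂ : Finset ℕ) (hI₁ : I₁ ∈ B) (hI₂ : I₂ ∈ B)
    (hint : (I₁ ∩ I₂).Nonempty) (h12 : ¬I₁ ⊆ I₂) (h21 : ¬I₂ ⊆ I₁)
    (hcap : I₁ ∩ I₂ ∉ B) :
    ∃ J₁ ∈ B, ∃ J₂ ∈ B, ∃ j₁ ∈ J₁ \ J₂, ∃ j₂ ∈ J₂ \ J₁,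
      ∃ N N' : Finset (Finset ℕ),
        MaxNested (restrict B (J₁ ∩ J₂)) N ∧
        MaxNested (restrict B (((J₁ ∪ J₂) \ (J₁ ∩ J₂)) \ {j₁, j₂})) N' ∧
        (J₁ ∩ J₂).Nonempty ∧ J₁ ∩ J₂ ∉ B ∧ J₁ ∪ J₂ ⊆ I₁ ∪ I₂ ∧
        IsNested B (insert J₁ (N ∪ Bmax (restrict B (J₁ ∩ J₂)) ∪ N' ∪
          Bmax (restrict B (((J₁ ∪ J₂) \ (J₁ ∩ J₂)) \ {j₁, j₂})))) ∧
        IsNested B (insert J₂ (N ∪ Bmax (restrict B (J₁ ∩ J₂)) ∪ N' ∪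
          Bmax (restrict B (((J₁ ∪ J₂) \ (J₁ ∩ J₂)) \ {j₁, j₂})))) :=
  stmt_4_general S B hB hconn I₁ I₂ hI₁ hI₂ hint hcap
end
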